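/- Let Γ > 0 and α > 2, and set H(k) = ∫_{1}^{∞} (1 − (1 + Γ/r^α)^{−k}) r dr for integers k ≥ 0. Then for every integer j ≥ 0, the alternating sum A_j = ∑_{k=0}^{j} (−1)^k binom(j,k) / (1 + 2 H(k)) satisfies 0 ≤ A_j ≤ 1. -/

import Mathlib

/-!
Write `a k = (1 + 2 H k)⁻¹`, so that the alternating sum is `(-1)ʲ Δʲ a 0`. It suffices that `a` is
completely monotone, i.e. `(-1)ⁿ Δⁿ a ≥ 0` for all `n`: then `0 ≤ (-1)ʲ Δʲ a 0 ≤ a 0 = 1`.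

Completely monotone sequences are closed under sums, products, nonnegative multiples, pointwise
limits and integrals, hence under `exp`; `k ↦ qᵏ` with `0 ≤ q ≤ 1` is one. With
`q r = (1 + Γ / r^α)⁻¹`, the truncation of `exp (-t H k)` to `r ∈ (1, n]` is
`exp (-t ∫ r) · exp (t ∫ q r ^ k · r)`, the exponential of a moment sequence, so `exp (-t H k)` is
completely monotone for `t ≥ 0`, and then so is `a`, by `(1 + x)⁻¹ = ∫₀^∞ e^{-s} e^{-s x} ds`.
-/

open Finset Function Filter Topology MeasureTheory fwdDiff

section

variable {R : Type*} [CommRing R]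

theorem fwdDiff_mul_apply (f g : ℕ → R) (k : ℕ) :
    Δ_[1] (f * g) k = f k * Δ_[1] g k + Δ_[1] f k * g (k + 1) := by
  simp only [fwdDiff, Pi.mul_apply]; ring

theorem fwdDiff_iter_mul_apply (f g : ℕ → R) (n k : ℕ) :
    (Δ_[1])^[n] (f * g) k = ∑ ij ∈ antidiagonal n,
      (n.choose ij.1 : R) * ((Δ_[1])^[ij.1] f k * (Δ_[1])^[ij.2] g (k + ij.1)) := by
  induction n generalizing f g with
  | zero => simp
  | succ n ih =>
    have hstep : Δ_[1] (f * g) = f * Δ_[1] g + Δ_[1] f * fun m => g (m + 1) :=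
      funext (fwdDiff_mul_apply f g)
    rw [iterate_succ_apply, hstep, fwdDiff_iter_add, Pi.add_apply, ih, ih,
      sum_antidiagonal_choose_succ_mul (fun i j => (Δ_[1])^[i] f k * (Δ_[1])^[j] g (k + i)) n]
    congr 1
    refine sum_congr rfl fun ij hij => ?_
    rw [Nat.choose_symm_of_eq_add (mem_antidiagonal.1 hij).symm, fwdDiff_iter_comp_add,
      add_assoc, iterate_succ_apply]

theorem fwdDiff_iter_geometric_apply (q : R) (n k : ℕ) :
    (Δ_[1])^[n] (q ^ ·) k = (q - 1) ^ n * q ^ k := by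
  induction n generalizing k with
  | zero => simp
  | succ n ih => rw [iterate_succ_apply', fwdDiff, ih, ih]; ring

theorem neg_one_pow_mul_fwdDiff_iter_eq_sum (f : ℕ → R) (n k : ℕ) :
    (-1) ^ n * (Δ_[1])^[n] f k = ∑ i ∈ range (n + 1), (-1) ^ i * n.choose i * f (k + i) := by
  rw [fwdDiff_iter_eq_sum_shift, mul_sum]
  refine sum_congr rfl fun i hi => ?_
  obtain ⟨d, rfl⟩ := Nat.exists_eq_add_of_le (mem_range_succ_iff.1 hi)
  have hsign : (-1 : R) ^ (i + d) * (-1) ^ d = (-1) ^ i := by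
    rw [pow_add, mul_assoc, ← mul_pow, neg_one_mul, neg_neg, one_pow, mul_one]
  rw [Nat.add_sub_cancel_left, zsmul_eq_mul, smul_eq_mul, mul_one]
  push_cast
  rw [← hsign]
  ring

end

def IsCompletelyMonotone (f : ℕ → ℝ) : Prop :=
  ∀ n k, 0 ≤ (-1) ^ n * (Δ_[1])^[n] f k

theorem isCompletelyMonotone_geometric {q : ℝ} (h0 : 0 ≤ q) (h1 : q ≤ 1) :
    IsCompletelyMonotone (q ^ ·) := fun n k => by
  rw [fwdDiff_iter_geometric_apply, ← mul_assoc, ← mul_pow, neg_one_mul, neg_sub]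
  exact mul_nonneg (pow_nonneg (by linarith) n) (pow_nonneg h0 k)

theorem isCompletelyMonotone_one : IsCompletelyMonotone 1 := by
  rw [show (1 : ℕ → ℝ) = ((1 : ℝ) ^ ·) from funext fun k => (one_pow k).symm]
  exact isCompletelyMonotone_geometric zero_le_one le_rfl

namespace IsCompletelyMonotone

variable {f g : ℕ → ℝ}

theorem neg_one_pow_mul_fwdDiff_iter_le (hf : IsCompletelyMonotone f) (n k : ℕ) :
    (-1) ^ n * (Δ_[1])^[n] f k ≤ f k := by
  induction n generalizing k with
  | zero => simp
  | succ n ih =>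
    have h := hf n (k + 1)
    rw [iterate_succ_apply', fwdDiff, pow_succ]
    linarith [ih k]

theorem const_smul (hf : IsCompletelyMonotone f) {c : ℝ} (hc : 0 ≤ c) :
    IsCompletelyMonotone (c • f) := fun n k => by
  rw [fwdDiff_iter_const_smul, Pi.smul_apply, smul_eq_mul, mul_left_comm]
  exact mul_nonneg hc (hf n k)

theorem mul (hf : IsCompletelyMonotone f) (hg : IsCompletelyMonotone g) :
    IsCompletelyMonotone (f * g) := fun n k => by
  rw [fwdDiff_iter_mul_apply, mul_sum]
  refine sum_nonneg fun ij hij => ?_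
  rw [← mem_antidiagonal.1 hij, pow_add]
  exact (mul_nonneg (Nat.cast_nonneg _) (mul_nonneg (hf ij.1 k) (hg ij.2 (k + ij.1)))).trans_eq
    (by ring)

theorem pow (hf : IsCompletelyMonotone f) (m : ℕ) : IsCompletelyMonotone (f ^ m) := by
  induction m with
  | zero => simpa using isCompletelyMonotone_one
  | succ m ih => rw [pow_succ]; exact ih.mul hf

theorem finsetSum {ι : Type*} (s : Finset ι) {F : ι → ℕ → ℝ}
    (hF : ∀ i ∈ s, IsCompletelyMonotone (F i)) : IsCompletelyMonotone (∑ i ∈ s, F i) :=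
  fun n k => by
    rw [fwdDiff_iter_finsetSum, Finset.sum_apply, mul_sum]
    exact sum_nonneg fun i hi => hF i hi n k

theorem of_tendsto {ι : Type*} {l : Filter ι} [l.NeBot] {F : ι → ℕ → ℝ}
    (hF : ∀ i, IsCompletelyMonotone (F i)) (hlim : ∀ k, Tendsto (fun i => F i k) l (𝓝 (f k))) :
    IsCompletelyMonotone f := fun n k => by
  have h : Tendsto (fun i => (-1) ^ n * (Δ_[1])^[n] (F i) k) l
      (𝓝 ((-1) ^ n * (Δ_[1])^[n] f k)) := by
    simp only [neg_one_pow_mul_fwdDiff_iter_eq_sum]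
    exact tendsto_finsetSum _ fun i _ => (hlim (k + i)).const_mul _
  exact ge_of_tendsto' h fun i => hF i n k

theorem exp (hf : IsCompletelyMonotone f) : IsCompletelyMonotone (fun k => Real.exp (f k)) := by
  refine of_tendsto (l := atTop) (F := fun N => ∑ m ∈ range N, ((m.factorial : ℝ)⁻¹ • f ^ m))
    (fun N => finsetSum _ fun m _ => (hf.pow m).const_smul (by positivity)) fun k => ?_
  simpa [Finset.sum_apply, div_eq_inv_mul, Real.exp_eq_exp_ℝ] using
    (NormedSpace.expSeries_div_hasSum_exp (f k)).tendsto_sum_nat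

end IsCompletelyMonotone

theorem isCompletelyMonotone_integral {X : Type*} [MeasurableSpace X] {μ : Measure X}
    {F : X → ℕ → ℝ} (hF : ∀ᵐ x ∂μ, IsCompletelyMonotone (F x))
    (hint : ∀ k, Integrable (fun x => F x k) μ) :
    IsCompletelyMonotone (fun k => ∫ x, F x k ∂μ) := fun n k => by
  have h : (-1) ^ n * (Δ_[1])^[n] (fun k => ∫ x, F x k ∂μ) k
      = ∫ x, (-1) ^ n * (Δ_[1])^[n] (F x) k ∂μ := by
    simp only [neg_one_pow_mul_fwdDiff_iter_eq_sum]
    rw [integral_finsetSum _ fun i _ => (hint (k + i)).const_mul _]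
    simp only [integral_const_mul]
  rw [h]
  exact integral_nonneg_of_ae (hF.mono fun x hx => hx n k)

open Set

theorem isCompletelyMonotone_inv_one_add {f : ℕ → ℝ} (hf0 : ∀ k, 0 ≤ f k)
    (hf : ∀ t, 0 ≤ t → IsCompletelyMonotone (fun k => Real.exp (-(t * f k)))) :
    IsCompletelyMonotone (fun k => (1 + f k)⁻¹) := by
  have hpos : ∀ k, 0 < 1 + f k := fun k => by linarith [hf0 k]
  have hlaplace : ∀ k, (1 + f k)⁻¹ = ∫ s in Ioi 0, Real.exp (-s) * Real.exp (-(s * f k)) := by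
    intro k
    have h := integral_exp_mul_Ioi (neg_neg_of_pos (hpos k)) 0
    rw [mul_zero, Real.exp_zero, neg_div_neg_eq, one_div] at h
    rw [← h]
    refine setIntegral_congr_fun measurableSet_Ioi fun s _ => ?_
    rw [← Real.exp_add]; ring_nf
  simp only [hlaplace]
  refine isCompletelyMonotone_integral ?_ fun k => ?_
  · exact (ae_restrict_iff' measurableSet_Ioi).2 (ae_of_all _ fun s hs =>
      (hf s (le_of_lt hs)).const_smul (Real.exp_pos _).le)
  · refine (exp_neg_integrableOn_Ioi 0 (hpos k)).congr_fun (fun s _ => ?_) measurableSet_Ioi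
    rw [← Real.exp_add]; ring_nf

theorem isCompletelyMonotone_exp_neg_integral_one_sub_pow_mul {X : Type*} [MeasurableSpace X]
    {μ : Measure X} {q w : X → ℝ} (hq : ∀ᵐ x ∂μ, q x ∈ Set.Icc 0 1)
    (hqm : AEStronglyMeasurable q μ) (hw : Integrable w μ) (hw0 : ∀ᵐ x ∂μ, 0 ≤ w x) {c : ℝ}
    (hc : 0 ≤ c) :
    IsCompletelyMonotone (fun k => Real.exp (-(c * ∫ x, (1 - q x ^ k) * w x ∂μ))) := by
  have hmoment_int : ∀ k, Integrable (fun x => w x * q x ^ k) μ := fun k =>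
    hw.mono' (hw.aestronglyMeasurable.mul (hqm.pow k)) <| by
      filter_upwards [hq, hw0] with x hqx hwx
      rw [norm_mul, Real.norm_of_nonneg hwx, norm_pow, Real.norm_of_nonneg hqx.1]
      exact mul_le_of_le_one_right hwx (pow_le_one₀ hqx.1 hqx.2)
  have hmoment : IsCompletelyMonotone (fun k => ∫ x, w x * q x ^ k ∂μ) :=
    isCompletelyMonotone_integral (by
      filter_upwards [hq, hw0] with x hqx hwx
      exact (isCompletelyMonotone_geometric hqx.1 hqx.2).const_smul hwx) hmoment_int
  have hsplit : ∀ k, Real.exp (-(c * ∫ x, (1 - q x ^ k) * w x ∂μ))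
      = Real.exp (-(c * ∫ x, w x ∂μ)) * Real.exp (c * ∫ x, w x * q x ^ k ∂μ) := by
    intro k
    have h : ∫ x, (1 - q x ^ k) * w x ∂μ = ∫ x, w x ∂μ - ∫ x, w x * q x ^ k ∂μ := by
      rw [← integral_sub hw (hmoment_int k)]
      congr 1 with x; ring
    rw [h, ← Real.exp_add]; ring_nf
  simp only [hsplit]
  exact (hmoment.const_smul hc).exp.const_smul (Real.exp_pos _).le

theorem one_sub_inv_one_add_pow_nonneg {x : ℝ} (hx : 0 ≤ x) (k : ℕ) :
    0 ≤ 1 - ((1 + x) ^ k)⁻¹ :=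
  sub_nonneg.2 (inv_le_one_of_one_le₀ (one_le_pow₀ (by linarith)))

theorem one_sub_inv_one_add_pow_le {x : ℝ} (hx : 0 ≤ x) (k : ℕ) :
    1 - ((1 + x) ^ k)⁻¹ ≤ k * x := by
  have hfrac : x / (1 + x) ≤ x := div_le_self hx (by linarith)
  have hinv : (1 + x)⁻¹ = 1 + -(x / (1 + x)) := by field_simp; ring
  have hbernoulli := one_add_mul_le_pow (a := -(x / (1 + x)))
    (by linarith [div_le_one_of_le₀ (by linarith : x ≤ 1 + x) (by linarith)]) k
  rw [← hinv, inv_pow] at hbernoulli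
  calc 1 - ((1 + x) ^ k)⁻¹ ≤ k * (x / (1 + x)) := by linarith
    _ ≤ k * x := mul_le_mul_of_nonneg_left hfrac k.cast_nonneg

noncomputable def pathLossIntegral (Γ α : ℝ) (k : ℕ) : ℝ :=
  ∫ r in Ioi (1 : ℝ), (1 - ((1 + Γ / r ^ α) ^ k)⁻¹) * r

section PathLoss

variable {Γ α : ℝ}

theorem integrableOn_pathLossIntegrand (hΓ : 0 ≤ Γ) (hα : 2 < α) (k : ℕ) :
    IntegrableOn (fun r : ℝ => (1 - ((1 + Γ / r ^ α) ^ k)⁻¹) * r) (Ioi 1) := by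
  have hdom : IntegrableOn (fun r : ℝ => (k * Γ) * r ^ (1 - α)) (Ioi 1) :=
    (integrableOn_Ioi_rpow_of_lt (by linarith) zero_lt_one).const_mul _
  refine hdom.mono' (by fun_prop) <|
    (ae_restrict_iff' measurableSet_Ioi).2 (ae_of_all _ fun r (hr : 1 < r) => ?_)
  have hr0 : 0 < r := zero_lt_one.trans hr
  have hx : 0 ≤ Γ / r ^ α := div_nonneg hΓ (Real.rpow_nonneg hr0.le α)
  rw [Real.norm_of_nonneg (mul_nonneg (one_sub_inv_one_add_pow_nonneg hx k) hr0.le),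
    Real.rpow_sub hr0, Real.rpow_one]
  calc (1 - ((1 + Γ / r ^ α) ^ k)⁻¹) * r ≤ k * (Γ / r ^ α) * r :=
        mul_le_mul_of_nonneg_right (one_sub_inv_one_add_pow_le hx k) hr0.le
    _ = k * Γ * (r / r ^ α) := by ring

theorem pathLossIntegral_nonneg (hΓ : 0 ≤ Γ) (k : ℕ) : 0 ≤ pathLossIntegral Γ α k :=
  setIntegral_nonneg measurableSet_Ioi fun r (hr : 1 < r) =>
    mul_nonneg (one_sub_inv_one_add_pow_nonneg
      (div_nonneg hΓ (Real.rpow_nonneg (zero_le_one.trans hr.le) α)) k) (zero_le_one.trans hr.le)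

theorem isCompletelyMonotone_exp_neg_mul_pathLossIntegral (hΓ : 0 ≤ Γ) (hα : 2 < α)
    {t : ℝ} (ht : 0 ≤ t) :
    IsCompletelyMonotone (fun k => Real.exp (-(t * pathLossIntegral Γ α k))) := by
  -- `∫₁^∞ r dr` diverges, so the exponent only splits into a constant plus a moment sequence
  -- after truncating the integral to `(1, n + 1]`.
  refine IsCompletelyMonotone.of_tendsto (l := atTop)
    (F := fun (n : ℕ) k => Real.exp (-(t * ∫ r in (1 : ℝ)..(n + 1),
      (1 - ((1 + Γ / r ^ α) ^ k)⁻¹) * r))) (fun n => ?_) fun k => ?_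
  · have hn : (1 : ℝ) ≤ n + 1 := le_add_of_nonneg_left n.cast_nonneg
    have hqm : Measurable fun r : ℝ => (1 + Γ / r ^ α)⁻¹ := by fun_prop
    simp only [intervalIntegral.integral_of_le hn, ← inv_pow]
    refine isCompletelyMonotone_exp_neg_integral_one_sub_pow_mul ?_ hqm.aestronglyMeasurable
      (continuous_id.integrableOn_Icc.mono_set Ioc_subset_Icc_self) ?_ ht
    all_goals refine (ae_restrict_iff' measurableSet_Ioc).2 (ae_of_all _ fun r hr => ?_)
    · have hx : 0 ≤ Γ / r ^ α := div_nonneg hΓ (Real.rpow_nonneg (zero_le_one.trans hr.1.le) α)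
      exact ⟨inv_nonneg.2 (by linarith), inv_le_one_of_one_le₀ (by linarith)⟩
    · exact zero_le_one.trans hr.1.le
  · have hlim := intervalIntegral_tendsto_integral_Ioi 1
      (integrableOn_pathLossIntegrand hΓ hα k)
      (tendsto_atTop_add_const_right _ 1 tendsto_natCast_atTop_atTop)
    exact (Real.continuous_exp.tendsto _).comp ((hlim.const_mul t).neg)

end PathLoss

/-- For `Γ > 0` and `α > 2`, the alternating sum
`A_j = ∑_{k=0}^j (-1)^k C(j,k)/(1 + 2H(k))` lies in `[0,1]` for every `j ≥ 0`. -/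
theorem stmt11 (gam α : ℝ) (hgam : 0 < gam) (hα : 2 < α)
    (H : ℕ → ℝ)
    (hH : ∀ k : ℕ, H k = ∫ r in Set.Ioi (1:ℝ), (1 - ((1 + gam / r ^ α) ^ k)⁻¹) * r)
    (j : ℕ) :
    0 ≤ ∑ k ∈ Finset.range (j + 1), (-1 : ℝ) ^ k * (j.choose k) / (1 + 2 * H k) ∧
      ∑ k ∈ Finset.range (j + 1), (-1 : ℝ) ^ k * (j.choose k) / (1 + 2 * H k) ≤ 1 := by
  obtain rfl : H = pathLossIntegral gam α := funext hH
  set a : ℕ → ℝ := fun k => (1 + 2 * pathLossIntegral gam α k)⁻¹ with ha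
  have hcm : IsCompletelyMonotone a :=
    isCompletelyMonotone_inv_one_add
      (fun k => mul_nonneg zero_le_two (pathLossIntegral_nonneg hgam.le k)) fun t ht => by
        simpa only [mul_assoc] using
          isCompletelyMonotone_exp_neg_mul_pathLossIntegral hgam.le hα
            (mul_nonneg ht zero_le_two)
  have hA : ∑ k ∈ range (j + 1), (-1 : ℝ) ^ k * (j.choose k) / (1 + 2 * pathLossIntegral gam α k) =
      (-1) ^ j * (Δ_[1])^[j] a 0 := by
    simp only [neg_one_pow_mul_fwdDiff_iter_eq_sum, ha, zero_add, div_eq_mul_inv]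
  rw [hA]
  refine ⟨hcm j 0, (hcm.neg_one_pow_mul_fwdDiff_iter_le j 0).trans_eq ?_⟩
  simp [ha, pathLossIntegral]
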